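/- For a precise qualitative expectation φ, separating multiplication with φ distributes over pointwise multiplication: φ ⋆ (Y · Z) = (φ ⋆ Y) · (φ ⋆ Z). -/

import Mathlib

open ENNReal

abbrev Heap := ℤ → Option ℤ
abbrev Stack := String → ℤ
abbrev PState := Stack × Heap
abbrev Exp := PState → ℝ≥0∞

/-- Heaps are disjoint if their domains are disjoint. -/
def HDisj (h₁ h₂ : Heap) : Prop := ∀ l, h₁ l = none ∨ h₂ l = none

/-- Disjoint union of heaps. -/
def HJoin (h₁ h₂ : Heap) : Heap := fun l => (h₁ l).orElse (fun _ => h₂ l)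

/-- Separating multiplication: (X ⋆ Y)(s,h) = sup { X(s,h₁)·Y(s,h₂) | h₁ ⋆ h₂ = h }. -/
noncomputable def sepMul (X Y : Exp) : Exp := fun σ =>
  ⨆ h₁, ⨆ h₂, ⨆ (_ : HDisj h₁ h₂ ∧ HJoin h₁ h₂ = σ.2), X (σ.1, h₁) * Y (σ.1, h₂)

/-- One-bounded expectations take values in [0,1]. -/
def OneBounded (X : Exp) : Prop := ∀ σ, X σ ≤ 1

/-- Qualitative expectations take values in {0,1}. -/
def Qualitative (φ : Exp) : Prop := ∀ σ, φ σ = 0 ∨ φ σ = 1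

/-- Guarded magic wand: (φ -⋆ X)(s,h) = inf { X(s, h ⋆ h') | φ(s,h') = 1, h' ⊥ h },
with the infimum of the empty set being 1 (for one-bounded X). -/
noncomputable def wand (φ X : Exp) : Exp := fun σ =>
  (⨅ h' : {h' : Heap // φ (σ.1, h') = 1 ∧ HDisj σ.2 h'}, X (σ.1, HJoin σ.2 h'.1)) ⊓ 1

/-- An expectation is precise if for every state at most one subheap of the heap
gives it a nonzero value. -/
def Precise (X : Exp) : Prop := ∀ (s : Stack) (h : Heap),
  Set.Subsingleton
    {h1 : Heap | (∃ h2, HDisj h1 h2 ∧ HJoin h1 h2 = h) ∧ 0 < X (s, h1)}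

/-! Because `φ` is qualitative and precise, at each state either no split `h₁ ⊎ h₂` of the heap
has `φ(s, h₁) = 1`, and then `φ ⋆ X` vanishes there for every `X`, or exactly one does, and then
`(φ ⋆ X)(s, h) = X(s, h₂)` for every `X`. Either way `φ ⋆ ·` acts at that state as evaluation
times a fixed scalar in `{0, 1}`, which commutes with products. -/

theorem HJoin.right_cancel {h₁ h₂ h₂' : Heap} (hd : HDisj h₁ h₂) (hd' : HDisj h₁ h₂')
    (he : HJoin h₁ h₂ = HJoin h₁ h₂') : h₂ = h₂' := by
  funext l
  have hel := congrFun he l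
  cases hl : h₁ l with
  | none => simpa [HJoin, hl] using hel
  | some _ =>
    rw [(hd l).resolve_left (by simp [hl]), (hd' l).resolve_left (by simp [hl])]

theorem le_sepMul {X Y : Exp} {s : Stack} {h₁ h₂ h : Heap} (hd : HDisj h₁ h₂)
    (hj : HJoin h₁ h₂ = h) : X (s, h₁) * Y (s, h₂) ≤ sepMul X Y (s, h) :=
  le_iSup_of_le h₁ <| le_iSup_of_le h₂ <| le_iSup_of_le (α := ℝ≥0∞) ⟨hd, hj⟩ le_rfl

theorem sepMul_eq_zero {φ X : Exp} {s : Stack} {h : Heap}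
    (hφ : ∀ h₁ h₂, HDisj h₁ h₂ → HJoin h₁ h₂ = h → φ (s, h₁) = 0) :
    sepMul φ X (s, h) = 0 :=
  le_antisymm (iSup_le fun h₁ => iSup_le fun h₂ => iSup_le fun ⟨hd, hj⟩ => by
    rw [hφ h₁ h₂ hd hj, zero_mul]) zero_le

theorem sepMul_eq_of_split {φ X : Exp} (hφ : Qualitative φ) (hprec : Precise φ)
    {s : Stack} {h₁ h₂ h : Heap} (hd : HDisj h₁ h₂) (hj : HJoin h₁ h₂ = h)
    (h₁φ : φ (s, h₁) = 1) : sepMul φ X (s, h) = X (s, h₂) := by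
  refine le_antisymm (iSup_le fun h₁' => iSup_le fun h₂' => iSup_le fun ⟨hd', hj'⟩ => ?_) ?_
  · rcases hφ (s, h₁') with h₁'φ | h₁'φ
    · simp [h₁'φ]
    obtain rfl : h₁' = h₁ :=
      hprec s h ⟨⟨h₂', hd', hj'⟩, by simp [h₁'φ]⟩ ⟨⟨h₂, hd, hj⟩, by simp [h₁φ]⟩
    obtain rfl : h₂' = h₂ := HJoin.right_cancel hd' hd (hj'.trans hj.symm)
    rw [h₁'φ, one_mul]
  · simpa [h₁φ] using le_sepMul (X := φ) (Y := X) (s := s) hd hj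

theorem precise_sepMul_mul_general (φ Y Z : Exp)
    (hφ : Qualitative φ) (hprec : Precise φ) :
    sepMul φ (fun σ => Y σ * Z σ) =
      fun σ => sepMul φ Y σ * sepMul φ Z σ := by
  funext ⟨s, h⟩
  by_cases hsplit : ∃ h₁ h₂, HDisj h₁ h₂ ∧ HJoin h₁ h₂ = h ∧ φ (s, h₁) = 1
  · obtain ⟨h₁, h₂, hd, hj, h₁φ⟩ := hsplit
    simp only [sepMul_eq_of_split hφ hprec hd hj h₁φ]
  · have hφ0 : ∀ h₁ h₂, HDisj h₁ h₂ → HJoin h₁ h₂ = h → φ (s, h₁) = 0 :=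
      fun h₁ h₂ hd hj => (hφ _).resolve_right fun h₁φ => hsplit ⟨h₁, h₂, hd, hj, h₁φ⟩
    simp only [sepMul_eq_zero hφ0, zero_mul]

theorem precise_sepMul_mul (φ Y Z : Exp)
    (hφ : Qualitative φ) (hprec : Precise φ)
    (hY : OneBounded Y) (hZ : OneBounded Z) :
    sepMul φ (fun σ => Y σ * Z σ) =
      fun σ => sepMul φ Y σ * sepMul φ Z σ :=
  precise_sepMul_mul_general φ Y Z hφ hprec
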